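/- arXiv:1606.02623 — 3 statements merged into one kernel-verified Lean document; each statement's English description precedes it below -/
import Mathlib

section
/- Let φ : ℝ² → ℝ be a nonnegative, convex, twice continuously differentiable function, let ψ = |·|² + φ, and let σ be the projection measure on the graph of ψ. Then the convolution measure σ ∗ σ is absolutely continuous with respect to Lebesgue measure on ℝ³, and its topological support equals the set {(ξ, τ) ∈ ℝ² × ℝ : τ ≥ 2ψ(ξ/2)}. -/
open MeasureTheory Filter
open scoped ENNReal

noncomputable section

abbrev R2 : Type := EuclideanSpace ℝ (Fin 2)
abbrev R3 : Type := R2 × ℝ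

/-- Projection measure on the graph of `Ψ`. -/
def proj (Ψ : R2 → ℝ) : Measure R3 :=
  Measure.map (fun y => (y, Ψ y)) volume

/-- Convolution of Borel measures on `ℝ³`. -/
def mconv (μ ν : Measure R3) : Measure R3 :=
  Measure.map (fun p : R3 × R3 => p.1 + p.2) (μ.prod ν)

/-- Topological support of a measure on `ℝ³`. -/
def msupport (μ : Measure R3) : Set R3 :=
  {x | ∀ U : Set R3, IsOpen U → x ∈ U → μ U ≠ 0}

/-!
`σ ∗ σ` is the pushforward of Lebesgue measure on `ℝ² × ℝ²` under
`(y, z) ↦ (y + z, ψ y + ψ z)`, and `ψ` is `2`-strongly convex.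

After the shear `(y, z) ↦ (y + z, z)`, the fibre over `ξ` is pushed forward by the strictly
convex map `z ↦ ψ (ξ - z) + ψ z`. On every line this is a strictly convex function of one
variable, which is injective with non-vanishing derivative on each side of the unique zero of its
derivative; by the change-of-variables formula it pulls null sets back to null sets, and Fubini
gives absolute continuity.

The support of a pushforward under a continuous map is the closure of its range. Strong
convexity gives `ψ (m + v) + ψ (m - v) ≥ 2 ψ m + 2 ‖v‖²`, so the range is the closed set
`{τ ≥ 2 ψ (ξ / 2)}`: the inclusion is the case `m = (y + z) / 2`, and the reverse inclusion
follows from the intermediate value theorem along `t ↦ (m + t u, m - t u)`.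
-/

open Set

theorem MeasureTheory.addHaar_preimage_inter_eq_zero_of_injOn {E : Type*}
    [NormedAddCommGroup E] [NormedSpace ℝ E] [FiniteDimensional ℝ E] [MeasurableSpace E]
    [BorelSpace E]
    (μ : Measure E) [μ.IsAddHaarMeasure] {f : E → E} {f' : E → E →L[ℝ] E} {s N : Set E}
    (hs : MeasurableSet s) (hf' : ∀ x ∈ s, HasFDerivWithinAt f (f' x) s x) (hf : InjOn f s)
    (hdet : ∀ x ∈ s, (f' x).det ≠ 0) (hN : μ N = 0) : μ (f ⁻¹' N ∩ s) = 0 := by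
  set W := (μ.restrict s).withDensity fun x => ENNReal.ofReal |(f' x).det|
  have hfm : AEMeasurable f W :=
    (ContinuousOn.aemeasurable (fun x hx => (hf' x hx).continuousWithinAt) hs).mono_ac
      (withDensity_absolutelyContinuous _ _)
  have hW : W (f ⁻¹' N) = 0 := by
    refine le_antisymm ((Measure.le_map_apply hfm N).trans ?_) zero_le
    rw [map_withDensity_abs_det_fderiv_eq_addHaar μ hs.nullMeasurableSet hf' hf]
    exact (Measure.restrict_apply_le _ _).trans hN.le
  have hsW : μ.restrict s ≪ W :=
    withDensity_absolutelyContinuous' (aemeasurable_ofReal_abs_det_fderivWithin μ hs hf')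
      ((ae_restrict_iff' hs).2 (ae_of_all _ fun x hx => by simpa using hdet x hx))
  rw [← Measure.restrict_apply' hs]
  exact hsW hW

theorem StrictConvexOn.volume_preimage_eq_zero {f : ℝ → ℝ} (hf : StrictConvexOn ℝ univ f)
    (hd : Differentiable ℝ f) {N : Set ℝ} (hN : volume N = 0) : volume (f ⁻¹' N) = 0 := by
  have hnull : ∀ s, MeasurableSet s → InjOn f s → (∀ x ∈ s, deriv f x ≠ 0) →
      volume (f ⁻¹' N ∩ s) = 0 := fun s hs hinj hne =>
    addHaar_preimage_inter_eq_zero_of_injOn volume hs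
      (fun x _ => (hd x).hasDerivAt.hasFDerivAt.hasFDerivWithinAt) hinj
      (fun x hx => by simpa using hne x hx) hN
  have hpos : InjOn f {x | 0 < deriv f x} := by
    refine StrictMonoOn.injOn fun x hx y _ hxy => ?_
    have := hx.trans (hf.deriv_lt_slope trivial trivial hxy (hd x))
    rwa [slope_def_field, lt_div_iff₀ (sub_pos.2 hxy), zero_mul, sub_pos] at this
  have hneg : InjOn f {x | deriv f x < 0} := by
    refine StrictAntiOn.injOn fun x _ y hy hxy => ?_
    have := (hf.slope_lt_deriv trivial trivial hxy (hd y)).trans hy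
    rwa [slope_def_field, div_lt_iff₀ (sub_pos.2 hxy), zero_mul, sub_neg] at this
  have hzero : {x | deriv f x = 0}.Subsingleton := fun x hx y hy =>
    (hf.strictMonoOn_deriv fun x _ => hd x).injOn trivial trivial (hx.trans hy.symm)
  have hcover : f ⁻¹' N ⊆
      (f ⁻¹' N ∩ {x | 0 < deriv f x}) ∪ (f ⁻¹' N ∩ {x | deriv f x < 0}) ∪ {x | deriv f x = 0} := by
    intro x hx
    rcases lt_trichotomy (deriv f x) 0 with h | h | h <;> simp [hx, h]
  refine measure_mono_null hcover (measure_union_null (measure_union_null ?_ ?_)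
    (hzero.measure_zero volume))
  · exact hnull _ (measurableSet_lt measurable_const (measurable_deriv f)) hpos
      fun x hx => hx.ne'
  · exact hnull _ (measurableSet_lt (measurable_deriv f) measurable_const) hneg
      fun x hx => hx.ne

theorem StrictConvexOn.comp_line {E : Type*} [AddCommGroup E] [Module ℝ E] {g : E → ℝ}
    (hg : StrictConvexOn ℝ univ g) (x : E) {v : E} (hv : v ≠ 0) :
    StrictConvexOn ℝ univ fun t : ℝ => g (x + t • v) := by
  refine ⟨convex_univ, fun s _ t _ hst a b ha hb hab => ?_⟩
  have hline : x + (a • s + b • t) • v = a • (x + s • v) + b • (x + t • v) := by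
    obtain rfl : b = 1 - a := by linarith
    module
  show g (x + (a • s + b • t) • v) < a • g (x + s • v) + b • g (x + t • v)
  rw [hline]
  have hne : x + s • v ≠ x + t • v := by
    simpa [add_right_inj, (smul_left_injective ℝ hv).ne_iff] using hst
  exact hg.2 trivial trivial hne ha hb hab

theorem StrictConvexOn.map_volume_absolutelyContinuous {G : R2 → ℝ}
    (hG : StrictConvexOn ℝ univ G) (hd : Differentiable ℝ G) :
    (volume : Measure R2).map G ≪ volume := by
  set e₀ : R2 := EuclideanSpace.single 0 1
  set e₁ : R2 := EuclideanSpace.single 1 1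
  have he : MeasurePreserving (fun p : ℝ × ℝ => p.1 • e₀ + p.2 • e₁) volume volume := by
    have hfun : (fun p : ℝ × ℝ => p.1 • e₀ + p.2 • e₁) =
        WithLp.toLp 2 ∘ (MeasurableEquiv.finTwoArrow (α := ℝ)).symm := by
      funext p
      ext i
      fin_cases i <;> simp [e₀, e₁]
    rw [hfun]
    exact (PiLp.volume_preserving_toLp (Fin 2)).comp (volume_preserving_finTwoArrow ℝ).symm
  refine Measure.AbsolutelyContinuous.mk fun N hN hN0 => ?_
  have hGN : MeasurableSet (G ⁻¹' N) := hd.continuous.measurable hN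
  rw [Measure.map_apply hd.continuous.measurable hN,
    ← he.measure_preimage hGN.nullMeasurableSet, Measure.volume_eq_prod,
    Measure.prod_apply (he.measurable hGN)]
  have he₁ : e₁ ≠ 0 := by simp [e₁]
  have hslice : ∀ a : ℝ, volume ((fun t : ℝ => G (a • e₀ + t • e₁)) ⁻¹' N) = 0 := fun a =>
    (hG.comp_line (a • e₀) he₁).volume_preimage_eq_zero (hd.comp (by fun_prop)) hN0
  exact (lintegral_congr fun a => hslice a).trans lintegral_zero

theorem MeasureTheory.Measure.map_skewProduct_absolutelyContinuous {α β γ : Type*}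
    [MeasurableSpace α] [MeasurableSpace β] [MeasurableSpace γ]
    {μ : Measure α} {ν : Measure β} {ρ : Measure γ}
    [SFinite ν] [SFinite ρ] {h : α → β → γ} (hh : Measurable (Function.uncurry h))
    (hac : ∀ x, ν.map (h x) ≪ ρ) :
    (μ.prod ν).map (fun p => (p.1, h p.1 p.2)) ≪ μ.prod ρ := by
  refine Measure.AbsolutelyContinuous.mk fun S hS hS0 => ?_
  have hmk : Measurable fun p : α × β => (p.1, h p.1 p.2) := measurable_fst.prodMk hh
  rw [Measure.map_apply hmk hS, Measure.prod_apply (hmk hS)]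
  refine lintegral_eq_zero_of_ae_eq_zero ?_
  filter_upwards [Measure.measure_ae_null_of_prod_null hS0] with x (hx : ρ _ = 0)
  have hx' : Measurable (h x) := hh.comp measurable_prodMk_left
  exact (Measure.map_apply hx' (measurable_prodMk_left hS)).symm.trans (hac x hx)

def graphSum {E : Type*} [Add E] (ψ : E → ℝ) (p : E × E) : E × ℝ :=
  (p.1 + p.2, ψ p.1 + ψ p.2)

theorem mconv_proj_self_eq_map {ψ : R2 → ℝ} (hψ : Measurable ψ) :
    mconv (proj ψ) (proj ψ) = (volume : Measure (R2 × R2)).map (graphSum ψ) := by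
  have hg : Measurable fun y : R2 => (y, ψ y) := measurable_id.prodMk hψ
  rw [mconv, proj, Measure.map_prod_map _ _ hg hg,
    Measure.map_map measurable_add (hg.prodMap hg)]
  rfl

theorem map_graphSum_absolutelyContinuous {ψ : R2 → ℝ} (hψ : StrictConvexOn ℝ univ ψ)
    (hd : Differentiable ℝ ψ) : (volume : Measure (R2 × R2)).map (graphSum ψ) ≪ volume := by
  have hψm : Measurable ψ := hd.continuous.measurable
  have hshear : MeasurePreserving (fun p : R2 × R2 => (p.1 + p.2, p.2)) :=
    measurePreserving_add_prod volume volume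
  have hfactor : graphSum ψ =
      (fun p : R2 × R2 => (p.1, ψ (p.1 - p.2) + ψ p.2)) ∘ fun p => (p.1 + p.2, p.2) := by
    funext p
    simp [graphSum]
  have hslice (ξ : R2) : StrictConvexOn ℝ univ fun z => ψ (ξ - z) + ψ z := by
    have h := hψ.convexOn.comp_affineMap (AffineMap.const ℝ R2 ξ - AffineMap.id ℝ R2)
    exact ConvexOn.add_strictConvexOn (by simpa [Function.comp_def] using h) hψ
  rw [hfactor, ← Measure.map_map (by fun_prop) hshear.measurable, hshear.map_eq]
  exact Measure.map_skewProduct_absolutelyContinuous (by fun_prop) fun ξ =>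
    (hslice ξ).map_volume_absolutelyContinuous (by fun_prop)

theorem msupport_map_eq_closure_range {X : Type*} [TopologicalSpace X] [MeasurableSpace X]
    [OpensMeasurableSpace X] {μ : Measure X} [μ.IsOpenPosMeasure] {F : X → R3}
    (hF : Continuous F) : msupport (μ.map F) = closure (range F) := by
  ext q
  simp only [msupport, mem_ofPred_eq, mem_closure_iff]
  refine forall₃_congr fun U hU _ => ?_
  rw [Measure.map_apply hF.measurable hU.measurableSet, ← pos_iff_ne_zero,
    (hU.preimage hF).measure_pos_iff μ, nonempty_preimage_iff]

theorem StrongConvexOn.two_mul_add_mul_norm_sq_le {E : Type*} [NormedAddCommGroup E]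
    [NormedSpace ℝ E] {ψ : E → ℝ} {k : ℝ} (hψ : StrongConvexOn univ k ψ) (m v : E) :
    2 * ψ m + k * ‖v‖ ^ 2 ≤ ψ (m + v) + ψ (m - v) := by
  have h := hψ.2 (mem_univ (m + v)) (mem_univ (m - v)) (by norm_num : (0 : ℝ) ≤ 2⁻¹)
    (by norm_num : (0 : ℝ) ≤ 2⁻¹) (by norm_num)
  have hmid : (2⁻¹ : ℝ) • (m + v) + (2⁻¹ : ℝ) • (m - v) = m := by module
  have hdiff : ‖m + v - (m - v)‖ = 2 * ‖v‖ := by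
    rw [add_sub_sub_cancel, ← two_smul ℝ v, norm_smul, Real.norm_two]
  rw [hmid, hdiff, smul_eq_mul, smul_eq_mul] at h
  linarith

theorem range_graphSum {E : Type*} [NormedAddCommGroup E] [NormedSpace ℝ E] [Nontrivial E]
    {ψ : E → ℝ} {k : ℝ} (hψ : StrongConvexOn univ k ψ) (hk : 0 < k) (hc : Continuous ψ) :
    range (graphSum ψ) = {q | 2 * ψ ((2 : ℝ)⁻¹ • q.1) ≤ q.2} := by
  refine Subset.antisymm ?_ fun q hq => ?_
  · rintro _ ⟨⟨y, z⟩, rfl⟩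
    have h := hψ.two_mul_add_mul_norm_sq_le ((2 : ℝ)⁻¹ • (y + z)) ((2 : ℝ)⁻¹ • (y - z))
    have hy : (2 : ℝ)⁻¹ • (y + z) + (2 : ℝ)⁻¹ • (y - z) = y := by module
    have hz : (2 : ℝ)⁻¹ • (y + z) - (2 : ℝ)⁻¹ • (y - z) = z := by module
    rw [hy, hz] at h
    exact (le_add_of_nonneg_right (by positivity)).trans h
  · obtain ⟨u, hu⟩ := exists_norm_eq E zero_le_one
    set m : E := (2 : ℝ)⁻¹ • q.1
    set f : ℝ → ℝ := fun t => ψ (m + t • u) + ψ (m - t • u)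
    -- `k * T ^ 2 ≥ k * T ≥ q.2 - 2 * ψ m`, hence `f T ≥ q.2`
    set T := (q.2 - 2 * ψ m) / k + 1
    have hgap : 0 ≤ q.2 - 2 * ψ m := sub_nonneg.2 hq
    have hT : 1 ≤ T := le_add_of_nonneg_left (div_nonneg hgap hk.le)
    have hkT : k * T = q.2 - 2 * ψ m + k := by simp only [T]; field_simp
    have hf0 : f 0 ≤ q.2 := by simpa [f, two_mul] using hq
    have hfT : q.2 ≤ f T := by
      have h := hψ.two_mul_add_mul_norm_sq_le m (T • u)
      rw [norm_smul, hu, mul_one, Real.norm_eq_abs, sq_abs] at h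
      nlinarith [mul_le_mul_of_nonneg_left hT (mul_nonneg hk.le (by linarith : (0 : ℝ) ≤ T))]
    obtain ⟨t, -, ht⟩ := intermediate_value_Icc (zero_le_one.trans hT)
      (by fun_prop : Continuous f).continuousOn ⟨hf0, hfT⟩
    refine ⟨(m + t • u, m - t • u), Prod.ext ?_ ht⟩
    show m + t • u + (m - t • u) = q.1
    simp only [m]; module

theorem statement10_general (φ : R2 → ℝ)
    (hφconv : ConvexOn ℝ Set.univ φ) (hφC2 : ContDiff ℝ 2 φ)
    (ψ : R2 → ℝ) (hψ : ψ = fun y => ‖y‖ ^ 2 + φ y) :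
    mconv (proj ψ) (proj ψ) ≪ volume ∧
    msupport (mconv (proj ψ) (proj ψ)) =
      {q : R3 | 2 * ψ ((2:ℝ)⁻¹ • q.1) ≤ q.2} := by
  have hstrong : StrongConvexOn univ 2 ψ := by
    rw [strongConvexOn_iff_convex]
    simpa [hψ] using hφconv
  have hd : Differentiable ℝ ψ := by
    rw [hψ]
    exact (contDiff_norm_sq ℝ).differentiable two_ne_zero |>.add
      (hφC2.differentiable two_ne_zero)
  have hc : Continuous ψ := hd.continuous
  have hclosed : IsClosed {q : R3 | 2 * ψ ((2:ℝ)⁻¹ • q.1) ≤ q.2} :=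
    isClosed_le (by fun_prop) continuous_snd
  rw [mconv_proj_self_eq_map hc.measurable]
  refine ⟨map_graphSum_absolutelyContinuous (hstrong.strictConvexOn two_pos) hd, ?_⟩
  rw [msupport_map_eq_closure_range (by unfold graphSum; fun_prop),
    range_graphSum hstrong two_pos hc,
    hclosed.closure_eq]

theorem statement10 (φ : R2 → ℝ) (hφ0 : ∀ y, 0 ≤ φ y)
    (hφconv : ConvexOn ℝ Set.univ φ) (hφC2 : ContDiff ℝ 2 φ)
    (ψ : R2 → ℝ) (hψ : ψ = fun y => ‖y‖ ^ 2 + φ y) :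
    mconv (proj ψ) (proj ψ) ≪ volume ∧
    msupport (mconv (proj ψ) (proj ψ)) =
      {q : R3 | 2 * ψ ((2:ℝ)⁻¹ • q.1) ≤ q.2} :=
  statement10_general φ hφconv hφC2 ψ hψ
end
end

section
/- Let d ≥ 1, let ψ, φ : ℝᵈ → ℝ be differentiable convex functions such that ψ − φ is convex and ψ is strictly convex, and let ξ, y ∈ ℝᵈ with y ≠ 0. Define g(t) = ψ(ξ/2 − ty) + ψ(ξ/2 + ty) − 2ψ(ξ/2) and h(t) = φ(ξ/2 − ty) + φ(ξ/2 + ty) − 2φ(ξ/2) for t ∈ ℝ. Then there exists a unique λ ≥ 0 such that h(1) = g(λ), and this λ satisfies λ ∈ [0, 1]. Moreover, if h(1) > 0 then λ > 0, and if h(1) < g(1) then λ < 1. -/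
open MeasureTheory Filter

noncomputable section

theorem statement12 (d : ℕ) (hd : 1 ≤ d)
    (ψ φ : EuclideanSpace ℝ (Fin d) → ℝ)
    (hψdiff : Differentiable ℝ ψ) (hφdiff : Differentiable ℝ φ)
    (hψconv : ConvexOn ℝ Set.univ ψ) (hφconv : ConvexOn ℝ Set.univ φ)
    (hdiffconv : ConvexOn ℝ Set.univ (fun x => ψ x - φ x))
    (hψsconv : StrictConvexOn ℝ Set.univ ψ)
    (ξ y : EuclideanSpace ℝ (Fin d)) (hy : y ≠ 0)
    (g h : ℝ → ℝ)
    (hg : g = fun t => ψ ((2:ℝ)⁻¹ • ξ - t • y) + ψ ((2:ℝ)⁻¹ • ξ + t • y) -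
      2 * ψ ((2:ℝ)⁻¹ • ξ))
    (hh : h = fun t => φ ((2:ℝ)⁻¹ • ξ - t • y) + φ ((2:ℝ)⁻¹ • ξ + t • y) -
      2 * φ ((2:ℝ)⁻¹ • ξ)) :
    ∃ l : ℝ, 0 ≤ l ∧ l ≤ 1 ∧ h 1 = g l ∧
      (∀ l' : ℝ, 0 ≤ l' → h 1 = g l' → l' = l) ∧
      (0 < h 1 → 0 < l) ∧ (h 1 < g 1 → l < 1) := by
  have hcmid : ∀ w : EuclideanSpace ℝ (Fin d),
      (1/2 : ℝ) • ((2:ℝ)⁻¹ • ξ - w) + (1/2 : ℝ) • ((2:ℝ)⁻¹ • ξ + w) = (2:ℝ)⁻¹ • ξ := by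
    intro w; module
  subst hg hh
  set c : EuclideanSpace ℝ (Fin d) := (2:ℝ)⁻¹ • ξ with hc
  -- strict convexity of t ↦ ψ (c + t • z) for z ≠ 0
  have key : ∀ z : EuclideanSpace ℝ (Fin d), z ≠ 0 →
      StrictConvexOn ℝ Set.univ (fun t : ℝ => ψ (c + t • z)) := by
    intro z hz
    refine ⟨convex_univ, ?_⟩
    intro x _ w _ hxw a b ha hb hab
    have hcc : a • c + b • c = c := by rw [← add_smul, hab, one_smul]
    have h1 : a • (c + x • z) + b • (c + w • z) = c + (a • x + b • w) • z := by
      have e : a • (c + x • z) + b • (c + w • z)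
          = (a • c + b • c) + ((a * x) • z + (b * w) • z) := by
        simp only [smul_add, smul_smul]; abel
      rw [e, hcc, ← add_smul]
      simp only [smul_eq_mul]
    have hne : c + x • z ≠ c + w • z := by
      intro heq
      exact hxw (smul_left_injective ℝ hz (add_left_cancel heq))
    have := hψsconv.2 (Set.mem_univ (c + x • z)) (Set.mem_univ (c + w • z)) hne ha hb hab
    rw [h1] at this
    simpa using this
  -- g strictly convex
  have gsc : StrictConvexOn ℝ Set.univ
      (fun t : ℝ => ψ (c - t • y) + ψ (c + t • y) - 2 * ψ c) := by
    have h2 := ((key (-y) (neg_ne_zero.mpr hy)).add (key y hy)).add_const (-(2 * ψ c))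
    have e1 : ((fun t : ℝ => ψ (c + t • (-y))) + fun t : ℝ => ψ (c + t • y)) +
        (fun _ : ℝ => -(2 * ψ c))
        = fun t : ℝ => ψ (c - t • y) + ψ (c + t • y) - 2 * ψ c := by
      funext t
      simp only [Pi.add_apply, smul_neg, ← sub_eq_add_neg]
    rwa [e1] at h2
  have geven : ∀ t : ℝ, ψ (c - (-t) • y) + ψ (c + (-t) • y) - 2 * ψ c
      = ψ (c - t • y) + ψ (c + t • y) - 2 * ψ c := by
    intro t
    rw [neg_smul, sub_neg_eq_add, ← sub_eq_add_neg]
    ring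
  set G : ℝ → ℝ := fun t : ℝ => ψ (c - t • y) + ψ (c + t • y) - 2 * ψ c with hG
  set H : ℝ → ℝ := fun t : ℝ => φ (c - t • y) + φ (c + t • y) - 2 * φ c with hH
  -- strict monotonicity on [0, ∞)
  have gmono : ∀ s t : ℝ, 0 ≤ s → s < t → G s < G t := by
    intro s t hs hst
    have ht : 0 < t := lt_of_le_of_lt hs hst
    have hne : (-t) ≠ t := by linarith
    have ha : 0 < (t - s) / (2 * t) := div_pos (by linarith) (by linarith)
    have hb : 0 < (t + s) / (2 * t) := div_pos (by linarith) (by linarith)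
    have hab : (t - s) / (2 * t) + (t + s) / (2 * t) = 1 := by
      field_simp; ring
    have hcomb : ((t - s) / (2 * t)) • (-t) + ((t + s) / (2 * t)) • t = s := by
      simp only [smul_eq_mul]
      field_simp
      ring
    have h3 := gsc.2 (Set.mem_univ (-t)) (Set.mem_univ t) hne ha hb hab
    rw [hcomb] at h3
    simp only [smul_eq_mul] at h3
    have h4 : G (-t) = G t := geven t
    rw [h4] at h3
    have h5 : (t - s) / (2 * t) * G t + (t + s) / (2 * t) * G t = G t := by
      rw [← add_mul, hab, one_mul]
    rw [h5] at h3
    exact h3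
  have g0 : G 0 = 0 := by simp only [hG, zero_smul, sub_zero, add_zero]; ring
  -- 0 ≤ H 1
  have hφ2 := hφconv.2 (Set.mem_univ (c - y)) (Set.mem_univ (c + y))
    (by norm_num : (0:ℝ) ≤ 1/2) (by norm_num : (0:ℝ) ≤ 1/2) (by norm_num)
  rw [hcmid y] at hφ2
  have hH1 : 0 ≤ H 1 := by
    simp only [smul_eq_mul] at hφ2
    simp only [hH, one_smul]
    linarith
  -- H 1 ≤ G 1
  have hd2 := hdiffconv.2 (Set.mem_univ (c - y)) (Set.mem_univ (c + y))
    (by norm_num : (0:ℝ) ≤ 1/2) (by norm_num : (0:ℝ) ≤ 1/2) (by norm_num)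
  rw [hcmid y] at hd2
  have hHG : H 1 ≤ G 1 := by
    simp only [smul_eq_mul] at hd2
    simp only [hH, hG, one_smul]
    linarith
  -- continuity of G
  have gcont : Continuous G := by
    have cψ := hψdiff.continuous
    have c1 : Continuous fun t : ℝ => c - t • y :=
      continuous_const.sub (continuous_id.smul continuous_const)
    have c2 : Continuous fun t : ℝ => c + t • y :=
      continuous_const.add (continuous_id.smul continuous_const)
    exact ((cψ.comp c1).add (cψ.comp c2)).sub continuous_const
  -- IVT
  have hmem : H 1 ∈ Set.Icc (G 0) (G 1) := ⟨by rw [g0]; exact hH1, hHG⟩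
  obtain ⟨l, hl, hgl⟩ := intermediate_value_Icc zero_le_one gcont.continuousOn hmem
  refine ⟨l, hl.1, hl.2, hgl.symm, ?_, ?_, ?_⟩
  · intro l' hl' hgl'
    have h6 : G l' = G l := hgl'.symm.trans hgl.symm
    rcases lt_trichotomy l' l with hlt | heq | hgt
    · exact absurd h6 (ne_of_lt (gmono l' l hl' hlt))
    · exact heq
    · exact absurd h6.symm (ne_of_lt (gmono l l' hl.1 hgt))
  · intro hpos
    rcases eq_or_lt_of_le hl.1 with heq | hlt
    · rw [← heq, g0] at hgl; linarith
    · exact hlt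
  · intro hlt1
    rcases eq_or_lt_of_le hl.2 with heq | hlt
    · rw [heq] at hgl; linarith
    · exact hlt
end
end

section
/- Let d ≥ 1, let ψ, φ : ℝᵈ → ℝ be continuously differentiable, strictly convex functions such that ψ − φ is convex, and fix ξ ∈ ℝᵈ. For y ≠ 0, let λ(y) be the unique nonnegative real number satisfying φ(ξ/2 − y) + φ(ξ/2 + y) − 2φ(ξ/2) = ψ(ξ/2 − λ(y)y) + ψ(ξ/2 + λ(y)y) − 2ψ(ξ/2), and define T : ℝᵈ \ {0} → ℝᵈ by T(y) = λ(y)·y. Then T is injective, and for every c > 0, T restricts to a bijection from the set E_φ(ξ, c) = {y ∈ ℝᵈ : φ(ξ/2 − y) + φ(ξ/2 + y) − 2φ(ξ/2) = c} onto the set E_ψ(ξ, c) = {y ∈ ℝᵈ : ψ(ξ/2 − y) + ψ(ξ/2 + y) − 2ψ(ξ/2) = c}. -/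
/-!
Along a ray `t ↦ t • z` (`z ≠ 0`, `t ≥ 0`), the second difference
`f (m - t • z) + f (m + t • z) - 2 * f m` of a strictly convex `f` vanishes at `t = 0`, is
strictly increasing, and grows at least linearly, so (being continuous, as `f` is convex in finite
dimension) it is an increasing bijection of `[0, ∞)`. The map `y ↦ λ(y) • y` keeps each ray, and
on it the defining equation of `λ` matches the level `c` of `φ` with the level `c` of `ψ`; both
matches being unique gives injectivity and the bijection of level sets.
-/

open Set Filter

def secondDiff {E : Type*} [AddCommGroup E] (f : E → ℝ) (m y : E) : ℝ :=
  f (m - y) + f (m + y) - 2 * f m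

section Ray

variable {E : Type*} [AddCommGroup E] {f : E → ℝ} {m y z : E} {s t : ℝ}

@[simp]
lemma secondDiff_zero : secondDiff f m 0 = 0 := by
  simp only [secondDiff, sub_zero, add_zero]
  ring

lemma ne_zero_of_secondDiff_eq {c : ℝ} (hy : secondDiff f m y = c) (hc : c ≠ 0) : y ≠ 0 := by
  rintro rfl
  exact hc (hy.symm.trans secondDiff_zero)

variable [Module ℝ E]

lemma StrictConvexOn.secondDiff_pos (hf : StrictConvexOn ℝ univ f) (hy : y ≠ 0) :
    0 < secondDiff f m y := by
  have hne : m - y ≠ m + y := fun h => hy <| calc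
    y = (2 : ℝ)⁻¹ • ((m + y) - (m - y)) := by module
    _ = 0 := by rw [h, sub_self, smul_zero]
  have hmid := hf.2 (mem_univ _) (mem_univ _) hne one_half_pos one_half_pos (add_halves 1)
  rw [show (1 / 2 : ℝ) • (m - y) + (1 / 2 : ℝ) • (m + y) = m by module] at hmid
  simp only [smul_eq_mul] at hmid
  unfold secondDiff
  linarith

lemma ConvexOn.secondDiff_smul_le (hf : ConvexOn ℝ univ f) (hs : 0 ≤ s) (hst : s ≤ t)
    (ht : 0 < t) : secondDiff f m (s • z) ≤ s / t * secondDiff f m (t • z) := by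
  have ha : 0 ≤ s / t := div_nonneg hs ht.le
  have hb : 0 ≤ 1 - s / t := sub_nonneg.2 ((div_le_one ht).2 hst)
  have hab : s / t + (1 - s / t) = 1 := add_sub_cancel _ _
  have hminus := hf.2 (mem_univ (m - t • z)) (mem_univ m) ha hb hab
  have hplus := hf.2 (mem_univ (m + t • z)) (mem_univ m) ha hb hab
  rw [show (s / t) • (m - t • z) + (1 - s / t) • m = m - s • z by
    rw [smul_sub, smul_smul, div_mul_cancel₀ _ ht.ne']; module] at hminus
  rw [show (s / t) • (m + t • z) + (1 - s / t) • m = m + s • z by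
    rw [smul_add, smul_smul, div_mul_cancel₀ _ ht.ne']; module] at hplus
  simp only [smul_eq_mul] at hminus hplus
  unfold secondDiff
  linarith

lemma StrictConvexOn.strictMonoOn_secondDiff_smul (hf : StrictConvexOn ℝ univ f) (hz : z ≠ 0) :
    StrictMonoOn (fun t : ℝ => secondDiff f m (t • z)) (Ici 0) := by
  intro s hs t _ hst
  have ht : 0 < t := lt_of_le_of_lt hs hst
  have hle := hf.convexOn.secondDiff_smul_le (m := m) (z := z) hs hst.le ht
  have hpos := hf.secondDiff_pos (m := m) (smul_ne_zero ht.ne' hz)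
  calc secondDiff f m (s • z) ≤ s / t * secondDiff f m (t • z) := hle
    _ < secondDiff f m (t • z) := mul_lt_of_lt_one_left hpos ((div_lt_one ht).2 hst)

lemma ConvexOn.mul_secondDiff_le_secondDiff_smul (hf : ConvexOn ℝ univ f) (ht : 1 ≤ t) :
    t * secondDiff f m z ≤ secondDiff f m (t • z) := by
  have ht0 : 0 < t := zero_lt_one.trans_le ht
  have hle := hf.secondDiff_smul_le (m := m) (z := z) zero_le_one ht ht0
  rwa [one_smul, one_div_mul_eq_div, le_div_iff₀ ht0, mul_comm] at hle

lemma StrictConvexOn.tendsto_secondDiff_smul_atTop (hf : StrictConvexOn ℝ univ f) (hz : z ≠ 0) :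
    Tendsto (fun t : ℝ => secondDiff f m (t • z)) atTop atTop :=
  tendsto_atTop_mono' _
    ((eventually_ge_atTop 1).mono fun _ ht => hf.convexOn.mul_secondDiff_le_secondDiff_smul ht)
    (tendsto_id.atTop_mul_const (hf.secondDiff_pos hz))

end Ray

lemma StrictConvexOn.exists_secondDiff_smul_eq {E : Type*} [NormedAddCommGroup E]
    [NormedSpace ℝ E] [FiniteDimensional ℝ E] {f : E → ℝ} (hf : StrictConvexOn ℝ univ f)
    (m : E) {z : E} (hz : z ≠ 0) {c : ℝ} (hc : 0 < c) :
    ∃ t : ℝ, 0 < t ∧ secondDiff f m (t • z) = c := by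
  have hcont : Continuous fun t : ℝ => secondDiff f m (t • z) := by
    have := hf.convexOn.locallyLipschitz.continuous
    unfold secondDiff
    fun_prop
  exact intermediate_value_Ioi hcont.continuousOn (hf.tendsto_secondDiff_smul_atTop hz)
    (by simpa using hc)

section Rescaling

variable {E : Type*} [AddCommGroup E] [Module ℝ E] {φ ψ : E → ℝ} {m : E} {lam : E → ℝ}

lemma pos_of_secondDiff_eq_secondDiff_smul (hφ : StrictConvexOn ℝ univ φ)
    (hlam : ∀ y : E, y ≠ 0 → 0 ≤ lam y ∧ secondDiff φ m y = secondDiff ψ m (lam y • y))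
    {y : E} (hy : y ≠ 0) : 0 < lam y := by
  obtain ⟨hnonneg, heq⟩ := hlam y hy
  refine hnonneg.lt_of_ne fun hzero => ?_
  have hpos := hφ.secondDiff_pos (m := m) hy
  rw [heq, ← hzero, zero_smul, secondDiff_zero] at hpos
  exact hpos.false

lemma injOn_smul_of_secondDiff_eq_secondDiff_smul (hφ : StrictConvexOn ℝ univ φ)
    (hlam : ∀ y : E, y ≠ 0 → 0 ≤ lam y ∧ secondDiff φ m y = secondDiff ψ m (lam y • y)) :
    InjOn (fun y => lam y • y) {y | y ≠ 0} := by
  intro y₁ hy₁ y₂ hy₂ hT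
  change lam y₁ • y₁ = lam y₂ • y₂ at hT
  have h₁ := pos_of_secondDiff_eq_secondDiff_smul hφ hlam hy₁
  have h₂ := pos_of_secondDiff_eq_secondDiff_smul hφ hlam hy₂
  have hy₂_eq : (lam y₁ / lam y₂) • y₁ = y₂ := by
    rw [div_eq_inv_mul, mul_smul, hT, inv_smul_smul₀ h₂.ne']
  have hφ_eq : secondDiff φ m ((1 : ℝ) • y₁) = secondDiff φ m ((lam y₁ / lam y₂) • y₁) := by
    rw [one_smul, hy₂_eq, (hlam y₁ hy₁).2, (hlam y₂ hy₂).2]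
    exact congrArg _ hT
  have hratio : (1 : ℝ) = lam y₁ / lam y₂ :=
    (hφ.strictMonoOn_secondDiff_smul hy₁).injOn (mem_Ici.2 zero_le_one) (div_pos h₁ h₂).le hφ_eq
  rw [← hy₂_eq, ← hratio, one_smul]

lemma mapsTo_smul_of_secondDiff_eq_secondDiff_smul
    (hlam : ∀ y : E, y ≠ 0 → 0 ≤ lam y ∧ secondDiff φ m y = secondDiff ψ m (lam y • y))
    {c : ℝ} (hc : 0 < c) :
    MapsTo (fun y => lam y • y) {y | secondDiff φ m y = c} {y | secondDiff ψ m y = c} := by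
  intro y hy
  exact (hlam y (ne_zero_of_secondDiff_eq hy hc.ne')).2.symm.trans hy

end Rescaling

lemma surjOn_smul_of_secondDiff_eq_secondDiff_smul {E : Type*} [NormedAddCommGroup E]
    [NormedSpace ℝ E] [FiniteDimensional ℝ E] {φ ψ : E → ℝ} {m : E} {lam : E → ℝ}
    (hφ : StrictConvexOn ℝ univ φ) (hψ : StrictConvexOn ℝ univ ψ)
    (hlam : ∀ y : E, y ≠ 0 → 0 ≤ lam y ∧ secondDiff φ m y = secondDiff ψ m (lam y • y))
    {c : ℝ} (hc : 0 < c) :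
    SurjOn (fun y => lam y • y) {y | secondDiff φ m y = c} {y | secondDiff ψ m y = c} := by
  intro z hz
  have hz0 := ne_zero_of_secondDiff_eq hz hc.ne'
  obtain ⟨t, ht, hφt⟩ := hφ.exists_secondDiff_smul_eq m hz0 hc
  obtain ⟨hnonneg, hψt⟩ := hlam (t • z) (smul_ne_zero ht.ne' hz0)
  rw [hφt, smul_smul] at hψt
  have hcoef : lam (t • z) * t = 1 :=
    (hψ.strictMonoOn_secondDiff_smul hz0).injOn (mem_Ici.2 (mul_nonneg hnonneg ht.le))
      (mem_Ici.2 zero_le_one) (by rw [one_smul, ← hψt, ← hz])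
  exact ⟨t • z, hφt, show lam (t • z) • t • z = z by rw [smul_smul, hcoef, one_smul]⟩

theorem statement13_general (d : ℕ)
    (ψ φ : EuclideanSpace ℝ (Fin d) → ℝ)
    (hψsconv : StrictConvexOn ℝ Set.univ ψ) (hφsconv : StrictConvexOn ℝ Set.univ φ)
    (ξ : EuclideanSpace ℝ (Fin d))
    (lam : EuclideanSpace ℝ (Fin d) → ℝ)
    (hlam : ∀ y : EuclideanSpace ℝ (Fin d), y ≠ 0 → 0 ≤ lam y ∧
      φ ((2:ℝ)⁻¹ • ξ - y) + φ ((2:ℝ)⁻¹ • ξ + y) - 2 * φ ((2:ℝ)⁻¹ • ξ) =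
        ψ ((2:ℝ)⁻¹ • ξ - lam y • y) + ψ ((2:ℝ)⁻¹ • ξ + lam y • y) -
          2 * ψ ((2:ℝ)⁻¹ • ξ))
    (T : EuclideanSpace ℝ (Fin d) → EuclideanSpace ℝ (Fin d))
    (hT : T = fun y => lam y • y) :
    Set.InjOn T {y | y ≠ 0} ∧
    ∀ c : ℝ, 0 < c →
      Set.BijOn T
        {y | φ ((2:ℝ)⁻¹ • ξ - y) + φ ((2:ℝ)⁻¹ • ξ + y) - 2 * φ ((2:ℝ)⁻¹ • ξ) = c}
        {y | ψ ((2:ℝ)⁻¹ • ξ - y) + ψ ((2:ℝ)⁻¹ • ξ + y) - 2 * ψ ((2:ℝ)⁻¹ • ξ) = c} := by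
  subst hT
  have hinj := injOn_smul_of_secondDiff_eq_secondDiff_smul (ψ := ψ) hφsconv hlam
  refine ⟨hinj, fun c hc => ⟨?_, ?_, ?_⟩⟩
  · exact mapsTo_smul_of_secondDiff_eq_secondDiff_smul hlam hc
  · exact hinj.mono fun y hy => ne_zero_of_secondDiff_eq hy hc.ne'
  · exact surjOn_smul_of_secondDiff_eq_secondDiff_smul hφsconv hψsconv hlam hc

theorem statement13 (d : ℕ) (hd : 1 ≤ d)
    (ψ φ : EuclideanSpace ℝ (Fin d) → ℝ)
    (hψC1 : ContDiff ℝ 1 ψ) (hφC1 : ContDiff ℝ 1 φ)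
    (hψsconv : StrictConvexOn ℝ Set.univ ψ) (hφsconv : StrictConvexOn ℝ Set.univ φ)
    (hdiffconv : ConvexOn ℝ Set.univ (fun x => ψ x - φ x))
    (ξ : EuclideanSpace ℝ (Fin d))
    (lam : EuclideanSpace ℝ (Fin d) → ℝ)
    (hlam : ∀ y : EuclideanSpace ℝ (Fin d), y ≠ 0 → 0 ≤ lam y ∧
      φ ((2:ℝ)⁻¹ • ξ - y) + φ ((2:ℝ)⁻¹ • ξ + y) - 2 * φ ((2:ℝ)⁻¹ • ξ) =
        ψ ((2:ℝ)⁻¹ • ξ - lam y • y) + ψ ((2:ℝ)⁻¹ • ξ + lam y • y) -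
          2 * ψ ((2:ℝ)⁻¹ • ξ))
    (T : EuclideanSpace ℝ (Fin d) → EuclideanSpace ℝ (Fin d))
    (hT : T = fun y => lam y • y) :
    Set.InjOn T {y | y ≠ 0} ∧
    ∀ c : ℝ, 0 < c →
      Set.BijOn T
        {y | φ ((2:ℝ)⁻¹ • ξ - y) + φ ((2:ℝ)⁻¹ • ξ + y) - 2 * φ ((2:ℝ)⁻¹ • ξ) = c}
        {y | ψ ((2:ℝ)⁻¹ • ξ - y) + ψ ((2:ℝ)⁻¹ • ξ + y) - 2 * ψ ((2:ℝ)⁻¹ • ξ) = c} :=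
  statement13_general d ψ φ hψsconv hφsconv ξ lam hlam T hT
end
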